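/- Define C̃(α) = α + α^(3/2) (2/π) ∑_{k≥1} k^(−2) ∫_0^{1/α} √y sin(πk²/(2y)) dy for α > 0 (the series converges absolutely). Then there exists a constant M > 0 such that for all α ≥ 1: | C̃(α) − α | ≤ M α^(−1). -/

import Mathlib

open Real

/-- The alternate expression of the Conrey–Farmer–Soundararajan transition function,
`C̃(α) = α + α^(3/2) (2/π) ∑_{k≥1} k^(-2) ∫_0^{1/α} √y sin(πk²/(2y)) dy`. -/
noncomputable def CFSalt (α : ℝ) : ℝ :=
  α + α ^ ((3:ℝ)/2) * (2 / Real.pi) *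
    ∑' k : ℕ+, ((k : ℝ) ^ 2)⁻¹ *
      ∫ y in (0:ℝ)..(1/α), Real.sqrt y * Real.sin (Real.pi * (k : ℝ) ^ 2 / (2 * y))

/-!
Write `F(y) = y^(5/2) cos(c/y)`, so that `F'(y) = (5/2) y^(3/2) cos(c/y) + c √y sin(c/y)` and
`F(y) → 0` as `y → 0⁺`. Integrating `F'` over `[0, ε]` bounds `c ∫_0^ε √y sin(c/y) dy` by
`ε^(5/2) + (5/2) ε^(5/2)`. With `c = πk²/2` the `k`-th term of the series is `O(ε^(5/2) k^(-4))`,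
so the series is `O(ε^(5/2))`, and `α^(3/2) · (1/α)^(5/2) = α⁻¹`.
-/

open Filter MeasureTheory intervalIntegral Topology

lemma intervalIntegrable_mul_of_abs_le {f g : ℝ → ℝ} (hf : Continuous f) (hg : Measurable g)
    {C : ℝ} (hgC : ∀ x, |g x| ≤ C) (a b : ℝ) :
    IntervalIntegrable (fun x => f x * g x) volume a b := by
  rw [intervalIntegrable_iff]
  exact (hf.intervalIntegrable a b).def'.integrable.mul_bdd hg.aestronglyMeasurable
    (ae_of_all _ hgC)

lemma hasDerivAt_sq_mul_sqrt_mul_cos_div (c : ℝ) {y : ℝ} (hy : 0 < y) :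
    HasDerivAt (fun y => y ^ 2 * √y * cos (c / y))
      (5 / 2 * (y * √y * cos (c / y)) + c * (√y * sin (c / y))) y := by
  have h := ((hasDerivAt_pow 2 y).fun_mul (hasDerivAt_sqrt hy.ne')).fun_mul
    ((hasDerivAt_inv hy.ne').const_mul c).cos
  simp only [← div_eq_mul_inv] at h
  refine h.congr_deriv ?_
  field_simp
  rw [sq_sqrt hy.le]
  norm_num
  ring

lemma continuous_sq_mul_sqrt_mul_cos_div (c : ℝ) :
    Continuous (fun y => y ^ 2 * √y * cos (c / y)) := by
  refine continuous_iff_continuousAt.2 fun y => ?_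
  rcases eq_or_ne y 0 with rfl | hy
  · have hbound : ∀ z : ℝ, ‖z ^ 2 * √z * cos (c / z)‖ ≤ z ^ 2 * √z := fun z => by
      rw [norm_mul, Real.norm_of_nonneg (by positivity)]
      exact mul_le_of_le_one_right (by positivity) (abs_cos_le_one _)
    have hlim : Tendsto (fun z : ℝ => z ^ 2 * √z) (𝓝 0) (𝓝 0) := by
      simpa using (by fun_prop : Continuous fun z : ℝ => z ^ 2 * √z).tendsto 0
    simpa [ContinuousAt] using squeeze_zero_norm hbound hlim
  · exact ((continuous_pow 2).mul continuous_sqrt).continuousAt.mul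
      (continuous_cos.continuousAt.comp (continuousAt_const.div continuousAt_id hy))

lemma abs_mul_abs_integral_sqrt_mul_sin_div_le (c : ℝ) {ε : ℝ} (hε : 0 ≤ ε) :
    |c| * |∫ y in (0:ℝ)..ε, √y * sin (c / y)| ≤ 7 / 2 * (ε ^ 2 * √ε) := by
  have hsin := intervalIntegrable_mul_of_abs_le (g := fun y => sin (c / y)) continuous_sqrt
    (measurable_sin.comp (measurable_const.div measurable_id)) (fun y => abs_sin_le_one (c / y)) 0 ε
  have hcos := intervalIntegrable_mul_of_abs_le (f := fun y => y * √y) (g := fun y => cos (c / y))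
    (continuous_id.mul continuous_sqrt)
    (measurable_cos.comp (measurable_const.div measurable_id)) (fun y => abs_cos_le_one (c / y)) 0 ε
  have hftc : ∫ y in (0:ℝ)..ε, (5 / 2 * (y * √y * cos (c / y)) + c * (√y * sin (c / y)))
      = ε ^ 2 * √ε * cos (c / ε) := by
    rw [integral_eq_sub_of_hasDerivAt_of_le hε
      (continuous_sq_mul_sqrt_mul_cos_div c).continuousOn
      (fun y hy => hasDerivAt_sq_mul_sqrt_mul_cos_div c hy.1)
      ((hcos.const_mul _).add (hsin.const_mul _))]
    simp
  rw [integral_add (hcos.const_mul _) (hsin.const_mul _), intervalIntegral.integral_const_mul,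
    intervalIntegral.integral_const_mul] at hftc
  have hboundary : |ε ^ 2 * √ε * cos (c / ε)| ≤ ε ^ 2 * √ε := by
    rw [abs_mul, abs_of_nonneg (by positivity)]
    exact mul_le_of_le_one_right (by positivity) (abs_cos_le_one _)
  have hcosint : |∫ y in (0:ℝ)..ε, y * √y * cos (c / y)| ≤ ε * √ε * ε := by
    simpa [abs_of_nonneg hε] using norm_integral_le_of_norm_le_const (a := 0) (b := ε)
      (C := ε * √ε) (f := fun y => y * √y * cos (c / y)) fun y hy => by
        rw [Set.uIoc_of_le hε] at hy
        have hy0 : 0 ≤ y * √y := mul_nonneg hy.1.le (sqrt_nonneg y)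
        rw [norm_mul, Real.norm_of_nonneg hy0]
        exact (mul_le_of_le_one_right hy0 (abs_cos_le_one _)).trans
          (mul_le_mul hy.2 (sqrt_le_sqrt hy.2) (sqrt_nonneg y) hε)
  calc |c| * |∫ y in (0:ℝ)..ε, √y * sin (c / y)|
      = |ε ^ 2 * √ε * cos (c / ε) - 5 / 2 * ∫ y in (0:ℝ)..ε, y * √y * cos (c / y)| := by
        rw [← abs_mul]; congr 1; linarith
    _ ≤ ε ^ 2 * √ε + 5 / 2 * (ε * √ε * ε) := by
        refine (abs_sub _ _).trans (add_le_add hboundary ?_)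
        rw [abs_mul, abs_of_pos (by norm_num : (0:ℝ) < 5 / 2)]
        gcongr
    _ = 7 / 2 * (ε ^ 2 * √ε) := by ring

lemma abs_inv_sq_mul_integral_sqrt_mul_sin_le (k : ℝ) {ε : ℝ} (hε : 0 ≤ ε) :
    |(k ^ 2)⁻¹ * ∫ y in (0:ℝ)..ε, √y * sin (π * k ^ 2 / (2 * y))|
      ≤ 7 / π * (ε ^ 2 * √ε) * (k ^ 4)⁻¹ := by
  rcases eq_or_ne k 0 with rfl | hk
  · simp
  have hkey := abs_mul_abs_integral_sqrt_mul_sin_div_le (π * k ^ 2 / 2) hε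
  simp only [div_div] at hkey
  rw [abs_of_pos (by positivity)] at hkey
  rw [abs_mul, abs_of_pos (by positivity), show 7 / π * (ε ^ 2 * √ε) * (k ^ 4)⁻¹ =
    (k ^ 2)⁻¹ * (7 / 2 * (ε ^ 2 * √ε) / (π * k ^ 2 / 2)) by field_simp]
  gcongr
  rw [le_div_iff₀ (by positivity)]
  linarith

lemma summable_pnat_inv_pow_four : Summable (fun k : ℕ+ => ((k : ℝ) ^ 4)⁻¹) :=
  (summable_nat_pow_inv.2 (by norm_num)).comp_injective PNat.coe_injective

lemma abs_tsum_inv_sq_mul_integral_sqrt_mul_sin_le {ε : ℝ} (hε : 0 ≤ ε) :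
    |∑' k : ℕ+, ((k : ℝ) ^ 2)⁻¹ * ∫ y in (0:ℝ)..ε, √y * sin (π * (k : ℝ) ^ 2 / (2 * y))|
      ≤ 7 / π * (ε ^ 2 * √ε) * ∑' k : ℕ+, ((k : ℝ) ^ 4)⁻¹ := by
  rw [← Real.norm_eq_abs]
  exact tsum_of_norm_bounded (summable_pnat_inv_pow_four.hasSum.mul_left _)
    fun k => (Real.norm_eq_abs _).trans_le (abs_inv_sq_mul_integral_sqrt_mul_sin_le k hε)

lemma rpow_three_halves_mul_inv_sq_mul_sqrt_inv {α : ℝ} (hα : 0 < α) :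
    α ^ ((3:ℝ)/2) * ((1 / α) ^ 2 * √(1 / α)) = α⁻¹ := by
  rw [show (3:ℝ)/2 = 1 + 1/2 by norm_num, rpow_add hα, rpow_one, ← sqrt_eq_rpow, one_div,
    sqrt_inv]
  field_simp

/-- as `α → ∞`, `C̃(α) = α + O(α^(-1))`. -/
theorem CFSalt_at_infinity :
    ∃ M > (0:ℝ), ∀ α : ℝ, 1 ≤ α → |CFSalt α - α| ≤ M * α⁻¹ := by
  set G := ∑' k : ℕ+, ((k : ℝ) ^ 4)⁻¹
  have hG : 0 < G := summable_pnat_inv_pow_four.tsum_pos (fun _ => by positivity) 1 (by norm_num)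
  refine ⟨14 / π ^ 2 * G, by positivity, fun α hα => ?_⟩
  have hα0 : 0 < α := one_pos.trans_le hα
  calc |CFSalt α - α|
      = α ^ ((3:ℝ)/2) * (2 / π) * |∑' k : ℕ+, ((k : ℝ) ^ 2)⁻¹ *
          ∫ y in (0:ℝ)..(1/α), √y * sin (π * (k : ℝ) ^ 2 / (2 * y))| := by
        rw [CFSalt, add_sub_cancel_left, abs_mul, abs_of_pos (by positivity)]
    _ ≤ α ^ ((3:ℝ)/2) * (2 / π) * (7 / π * ((1 / α) ^ 2 * √(1 / α)) * G) := by
        gcongr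
        exact abs_tsum_inv_sq_mul_integral_sqrt_mul_sin_le (by positivity)
    _ = 14 / π ^ 2 * G * α⁻¹ := by
        rw [← rpow_three_halves_mul_inv_sq_mul_sqrt_inv hα0]
        ring
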